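/- Let X be a Banach space over 𝕂 = ℝ or ℂ. For every k ≥ 1, the set of strong norm-attainment points of bounded k-homogeneous polynomials on X is contained in the set of strong norm-attainment points of bounded (k+1)-homogeneous polynomials: ρ̃𝒫(ᵏX) ⊆ ρ̃𝒫(ᵏ⁺¹X). In particular, sexp(B_X) = ρ̃𝒫(¹X) ⊆ ρ̃𝒫(²X) ⊆ ⋯. -/

import Mathlib

open Metric Filter Topology Set

/-- The sup norm of a function over the closed unit ball. -/
noncomputable def supNorm {X Y : Type*} [NormedAddCommGroup X] [NormedAddCommGroup Y]
    (f : X → Y) : ℝ :=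
  sSup ((fun x => ‖f x‖) '' Metric.closedBall (0 : X) 1)

/-- `f` strongly attains its (sup) norm at `x₀`: every maximizing sequence in the closed unit
ball has a subsequence converging to a unimodular multiple of `x₀`. -/
def StronglyAttains (𝕂 : Type*) [RCLike 𝕂] {X Y : Type*} [NormedAddCommGroup X]
    [NormedSpace 𝕂 X] [NormedAddCommGroup Y] (f : X → Y) (x₀ : X) : Prop :=
  ∀ xs : ℕ → X, (∀ n, xs n ∈ Metric.closedBall (0 : X) 1) →
    Tendsto (fun n => ‖f (xs n)‖) atTop (nhds (supNorm f)) →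
    ∃ (α : 𝕂) (φ : ℕ → ℕ), StrictMono φ ∧ ‖α‖ = 1 ∧
      Tendsto (fun n => xs (φ n)) atTop (nhds (α • x₀))

/-- The `k`-homogeneous polynomial associated to a continuous `k`-multilinear map. -/
noncomputable def polyEval {𝕂 : Type*} [RCLike 𝕂] {X Y : Type*} [NormedAddCommGroup X]
    [NormedSpace 𝕂 X] [NormedAddCommGroup Y] [NormedSpace 𝕂 Y] {k : ℕ}
    (L : ContinuousMultilinearMap 𝕂 (fun _ : Fin k => X) Y) : X → Y :=
  fun x => L (fun _ => x)

/-- The set `ρ̃𝒫(ᵏX)` of points of the closed unit ball at which some nonzero bounded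
`k`-homogeneous scalar polynomial strongly attains its norm. -/
def polyAttainPts (𝕂 : Type*) [RCLike 𝕂] (X : Type*) [NormedAddCommGroup X]
    [NormedSpace 𝕂 X] (k : ℕ) : Set X :=
  {x₀ | x₀ ∈ Metric.closedBall (0 : X) 1 ∧
    ∃ L : ContinuousMultilinearMap 𝕂 (fun _ : Fin k => X) 𝕂,
      polyEval L ≠ 0 ∧ StronglyAttains 𝕂 (polyEval L) x₀}

/-- Numerical radius `v(f) = sup { |x*(f x)| : (x, x*) ∈ Π(X) }`. -/
noncomputable def numRadius (𝕂 : Type*) [RCLike 𝕂] {X : Type*} [NormedAddCommGroup X]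
    [NormedSpace 𝕂 X] (f : X → X) : ℝ :=
  sSup {r | ∃ (x : X) (x' : X →L[𝕂] 𝕂), ‖x‖ = 1 ∧ ‖x'‖ = 1 ∧ x' x = 1 ∧ r = ‖x' (f x)‖}

/-- The `k`-polynomial numerical index `n^(k)(X)`. -/
noncomputable def polyNumIndex (𝕂 : Type*) [RCLike 𝕂] (X : Type*) [NormedAddCommGroup X]
    [NormedSpace 𝕂 X] (k : ℕ) : ℝ :=
  sInf {r | ∃ L : ContinuousMultilinearMap 𝕂 (fun _ : Fin k => X) X,
    supNorm (polyEval L) = 1 ∧ r = numRadius 𝕂 (polyEval L)}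

/-- The numerical index `n(X)` of a Banach space. -/
noncomputable def numIndex (𝕂 : Type*) [RCLike 𝕂] (X : Type*) [NormedAddCommGroup X]
    [NormedSpace 𝕂 X] : ℝ :=
  sInf {r | ∃ T : X →L[𝕂] X, ‖T‖ = 1 ∧ r = numRadius 𝕂 (⇑T)}

/-- `x` is an extreme point of the convex set `s` : `y + z = 2x` with `y, z ∈ s` forces
`y = z = x`. -/
def IsExtremePt {E : Type*} [AddCommGroup E] (s : Set E) (x : E) : Prop :=
  x ∈ s ∧ ∀ y ∈ s, ∀ z ∈ s, y + z = x + x → y = x ∧ z = x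

/-- `x` is a strongly exposed point of the closed unit ball. -/
def StronglyExposedPt (𝕂 : Type*) [RCLike 𝕂] {X : Type*} [NormedAddCommGroup X]
    [NormedSpace 𝕂 X] (x : X) : Prop :=
  x ∈ Metric.closedBall (0 : X) 1 ∧ ∃ x' : X →L[𝕂] 𝕂, x' ≠ 0 ∧ ‖x'‖ ≤ 1 ∧
    (∀ y ∈ Metric.closedBall (0 : X) 1, RCLike.re (x' y) ≤ RCLike.re (x' x)) ∧
    ∀ xs : ℕ → X, (∀ n, xs n ∈ Metric.closedBall (0 : X) 1) →
      Tendsto (fun n => RCLike.re (x' (xs n))) atTop (nhds (RCLike.re (x' x))) →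
      Tendsto xs atTop (nhds x)

/-- `x'` is a weak-* exposed point of the dual unit ball. -/
def WeakStarExposed (𝕂 : Type*) [RCLike 𝕂] {X : Type*} [NormedAddCommGroup X]
    [NormedSpace 𝕂 X] (x' : X →L[𝕂] 𝕂) : Prop :=
  ‖x'‖ ≤ 1 ∧ ∃ x ∈ Metric.closedBall (0 : X) 1, x' x = 1 ∧
    ∀ y' : X →L[𝕂] 𝕂, ‖y'‖ ≤ 1 → y' x = 1 → y' = x'

/-- `f` is a strong peak function at `x₀`: `f` is nonzero on the ball and every maximizing
sequence in the closed unit ball converges to `x₀`. -/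
def StrongPeakAt {X Y : Type*} [NormedAddCommGroup X] [NormedAddCommGroup Y]
    (f : X → Y) (x₀ : X) : Prop :=
  (∃ x ∈ Metric.closedBall (0 : X) 1, f x ≠ 0) ∧
    ∀ xs : ℕ → X, (∀ n, xs n ∈ Metric.closedBall (0 : X) 1) →
      Tendsto (fun n => ‖f (xs n)‖) atTop (nhds (supNorm f)) →
      Tendsto xs atTop (nhds x₀)

/-- Complex extreme point of the closed unit ball. -/
def ComplexExtremePoint {X : Type*} [NormedAddCommGroup X] [NormedSpace ℂ X] (x : X) : Prop :=
  x ∈ Metric.closedBall (0 : X) 1 ∧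
    ∀ y : X, (∀ θ : ℝ, ‖x + Complex.exp (θ * Complex.I) • y‖ ≤ 1) → y = 0

/-- Membership in `A_b(B_X : Y)`: bounded, continuous on the closed unit ball and
holomorphic on the open unit ball. -/
def MemAb {X Y : Type*} [NormedAddCommGroup X] [NormedSpace ℂ X] [NormedAddCommGroup Y]
    [NormedSpace ℂ Y] (f : X → Y) : Prop :=
  ContinuousOn f (Metric.closedBall (0 : X) 1) ∧
    (∃ C, ∀ x ∈ Metric.closedBall (0 : X) 1, ‖f x‖ ≤ C) ∧
    DifferentiableOn ℂ f (Metric.ball (0 : X) 1)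

/-- Membership in `A_u(B_X : Y)`: additionally uniformly continuous on the closed ball. -/
def MemAu {X Y : Type*} [NormedAddCommGroup X] [NormedSpace ℂ X] [NormedAddCommGroup Y]
    [NormedSpace ℂ Y] (f : X → Y) : Prop :=
  MemAb f ∧ UniformContinuousOn f (Metric.closedBall (0 : X) 1)

/-- The set `ρA_u(B_X)` of strong peak points of `A_u(B_X)`. -/
def strongPeakPtsAu (X : Type*) [NormedAddCommGroup X] [NormedSpace ℂ X] : Set X :=
  {x₀ | ∃ f : X → ℂ, MemAu f ∧ StrongPeakAt f x₀}

/-- The holomorphic numerical index `n_u(X)`. -/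
noncomputable def holNumIndex (X : Type*) [NormedAddCommGroup X] [NormedSpace ℂ X] : ℝ :=
  sInf {r | ∃ f : X → X, MemAu f ∧ supNorm f = 1 ∧ r = numRadius ℂ f}

/-!
A nonzero functional `g` strongly attains its norm at `x` exactly when `x` is strongly exposed
by `x' = g / g x`: maximizing sequences of `|g|` become maximizing sequences of `re x'` after a
rotation, and the unimodular factor allowed in strong attainment is the limit of those rotations
(compactness of the unit circle of `𝕂`); conversely `re x' → 1` forces that factor to be `1`.

For the inclusion, a point `x₀` at which a nonzero `k`-homogeneous `P` strongly attains its norm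
has `‖x₀‖ = 1` by homogeneity. With a norming functional `x'` of `x₀`, the `(k+1)`-homogeneous
`Q = P · x'` satisfies `|Q| ≤ |P|` on the ball and `Q x₀ = P x₀`, so `‖Q‖ = ‖P‖` and every
maximizing sequence of `Q` is one of `P`.
-/

section SupNorm

variable {X Y : Type*} [NormedAddCommGroup X] [NormedAddCommGroup Y] {f : X → Y}

lemma norm_le_supNorm (hf : BddAbove ((fun x => ‖f x‖) '' closedBall (0 : X) 1)) {x : X}
    (hx : x ∈ closedBall (0 : X) 1) : ‖f x‖ ≤ supNorm f :=
  le_csSup hf (mem_image_of_mem _ hx)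

lemma supNorm_le {C : ℝ} (hC : ∀ x ∈ closedBall (0 : X) 1, ‖f x‖ ≤ C) : supNorm f ≤ C :=
  csSup_le ((nonempty_closedBall.2 zero_le_one).image _) (forall_mem_image.2 hC)

lemma exists_tendsto_supNorm (hf : BddAbove ((fun x => ‖f x‖) '' closedBall (0 : X) 1)) :
    ∃ xs : ℕ → X, (∀ n, xs n ∈ closedBall (0 : X) 1) ∧
      Tendsto (fun n => ‖f (xs n)‖) atTop (𝓝 (supNorm f)) := by
  obtain ⟨u, -, hu, hmem⟩ :=
    exists_seq_tendsto_sSup ((nonempty_closedBall.2 zero_le_one).image _) hf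
  choose xs hxs hfxs using hmem
  exact ⟨xs, hxs, by simp only [hfxs]; exact hu⟩

end SupNorm

section StronglyAttains

variable {𝕂 X Y : Type*} [RCLike 𝕂] [NormedAddCommGroup X] [NormedSpace 𝕂 X]
  [NormedAddCommGroup Y] {f : X → Y} {x₀ : X}

lemma StronglyAttains.mono {Z : Type*} [NormedAddCommGroup Z] {g : X → Z}
    (hf : StronglyAttains 𝕂 f x₀) (hbdd : BddAbove ((fun x => ‖f x‖) '' closedBall (0 : X) 1))
    (hgf : ∀ x ∈ closedBall (0 : X) 1, ‖g x‖ ≤ ‖f x‖) (hsup : supNorm g = supNorm f) :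
    StronglyAttains 𝕂 g x₀ := by
  intro xs hxs hg
  refine hf xs hxs (tendsto_of_tendsto_of_tendsto_of_le_of_le (hsup ▸ hg) tendsto_const_nhds
    (fun n => hgf _ (hxs n)) (fun n => norm_le_supNorm hbdd (hxs n)))

lemma StronglyAttains.norm_apply_eq_supNorm (h : StronglyAttains 𝕂 f x₀) (hf : Continuous f)
    (hbdd : BddAbove ((fun x => ‖f x‖) '' closedBall (0 : X) 1))
    (hrot : ∀ α : 𝕂, ‖α‖ = 1 → ∀ x, ‖f (α • x)‖ = ‖f x‖) : ‖f x₀‖ = supNorm f := by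
  obtain ⟨xs, hxs, hmax⟩ := exists_tendsto_supNorm hbdd
  obtain ⟨α, φ, hφ, hα, hlim⟩ := h xs hxs hmax
  have hlim' : Tendsto (fun n => ‖f (xs (φ n))‖) atTop (𝓝 ‖f (α • x₀)‖) :=
    ((continuous_norm.comp hf).tendsto _).comp hlim
  rw [← hrot α hα]
  exact tendsto_nhds_unique hlim' (hmax.comp hφ.tendsto_atTop)

end StronglyAttains

section PolyEval

variable {𝕂 X Y : Type*} [RCLike 𝕂] [NormedAddCommGroup X] [NormedSpace 𝕂 X]
  [NormedAddCommGroup Y] [NormedSpace 𝕂 Y] {k : ℕ}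
  (L : ContinuousMultilinearMap 𝕂 (fun _ : Fin k => X) Y)

lemma polyEval_smul (c : 𝕂) (x : X) : polyEval L (c • x) = c ^ k • polyEval L x := by
  simpa [polyEval, Finset.prod_const] using L.map_smul_univ (fun _ => c) (fun _ => x)

lemma continuous_polyEval : Continuous (polyEval L) :=
  L.coe_continuous.comp (continuous_pi fun _ => continuous_id)

lemma norm_polyEval_le (x : X) : ‖polyEval L x‖ ≤ ‖L‖ * ‖x‖ ^ k := by
  simpa [polyEval, Finset.prod_const] using L.le_opNorm fun _ => x

lemma bddAbove_norm_polyEval :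
    BddAbove ((fun x => ‖polyEval L x‖) '' closedBall (0 : X) 1) := by
  refine ⟨‖L‖, forall_mem_image.2 fun x hx => (norm_polyEval_le L x).trans ?_⟩
  exact mul_le_of_le_one_right (norm_nonneg L)
    (pow_le_one₀ (norm_nonneg x) (mem_closedBall_zero_iff.1 hx))

lemma norm_polyEval_rotate {α : 𝕂} (hα : ‖α‖ = 1) (x : X) :
    ‖polyEval L (α • x)‖ = ‖polyEval L x‖ := by
  rw [polyEval_smul, norm_smul, norm_pow, hα, one_pow, one_mul]

lemma norm_polyEval_le_supNorm_mul (x : X) :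
    ‖polyEval L x‖ ≤ supNorm (polyEval L) * ‖x‖ ^ k := by
  rcases eq_or_ne x 0 with rfl | hx
  · rcases k.eq_zero_or_pos with rfl | hk
    · simpa using norm_le_supNorm (bddAbove_norm_polyEval L) (mem_closedBall_self zero_le_one)
    · have h0 : polyEval L 0 = 0 := by
        simpa [zero_pow hk.ne'] using polyEval_smul L (0 : 𝕂) 0
      simp [h0, zero_pow hk.ne']
  · have hx' : (‖x‖ : ℝ) ≠ 0 := norm_ne_zero_iff.2 hx
    have hu : (‖x‖⁻¹ : 𝕂) • x ∈ closedBall (0 : X) 1 := by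
      rw [mem_closedBall_zero_iff, norm_smul, norm_inv, RCLike.norm_ofReal, abs_norm,
        inv_mul_cancel₀ hx']
    have := norm_le_supNorm (bddAbove_norm_polyEval L) hu
    rw [polyEval_smul, norm_smul, norm_pow, norm_inv, RCLike.norm_ofReal, abs_norm] at this
    rwa [inv_pow, inv_mul_le_iff₀ (pow_pos (norm_pos_iff.2 hx) k), mul_comm] at this

lemma supNorm_polyEval_pos (hL : polyEval L ≠ 0) : 0 < supNorm (polyEval L) := by
  by_contra! h
  refine hL (funext fun x => norm_le_zero_iff.1 ?_)
  exact (norm_polyEval_le_supNorm_mul L x).trans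
    (mul_nonpos_of_nonpos_of_nonneg h (pow_nonneg (norm_nonneg x) k))

variable {L}

lemma StronglyAttains.norm_polyEval_eq_supNorm {x₀ : X}
    (h : StronglyAttains 𝕂 (polyEval L) x₀) : ‖polyEval L x₀‖ = supNorm (polyEval L) :=
  h.norm_apply_eq_supNorm (continuous_polyEval L) (bddAbove_norm_polyEval L)
    fun _ hα => norm_polyEval_rotate L hα

lemma StronglyAttains.norm_eq_one_of_polyEval {x₀ : X} (hk : k ≠ 0) (hL : polyEval L ≠ 0)
    (h : StronglyAttains 𝕂 (polyEval L) x₀) (hx₀ : x₀ ∈ closedBall (0 : X) 1) : ‖x₀‖ = 1 := by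
  have hpos := supNorm_polyEval_pos L hL
  have hle := norm_polyEval_le_supNorm_mul L x₀
  rw [h.norm_polyEval_eq_supNorm] at hle
  exact le_antisymm (mem_closedBall_zero_iff.1 hx₀)
    ((one_le_pow_iff_of_nonneg (norm_nonneg x₀) hk).1 ((le_mul_iff_one_le_right hpos).1 hle))

end PolyEval

section Functional

variable {𝕂 X : Type*} [RCLike 𝕂] [NormedAddCommGroup X] [NormedSpace 𝕂 X] {x : X}

lemma supNorm_continuousLinearMap {Y : Type*} [NormedAddCommGroup Y] [NormedSpace 𝕂 Y]
    (g : X →L[𝕂] Y) : supNorm g = ‖g‖ :=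
  g.sSup_unitClosedBall_eq_norm

lemma polyEval_continuousMultilinearCurryFin1_symm {Y : Type*} [NormedAddCommGroup Y]
    [NormedSpace 𝕂 Y] (g : X →L[𝕂] Y) :
    polyEval ((continuousMultilinearCurryFin1 𝕂 X Y).symm g) = g :=
  funext fun _ => by simp [polyEval]

lemma mem_polyAttainPts_one_iff : x ∈ polyAttainPts 𝕂 X 1 ↔
    x ∈ closedBall (0 : X) 1 ∧ ∃ g : X →L[𝕂] 𝕂, g ≠ 0 ∧ StronglyAttains 𝕂 g x := by
  simp only [polyAttainPts, mem_ofPred_eq,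
    (continuousMultilinearCurryFin1 𝕂 X 𝕂).symm.surjective.exists,
    polyEval_continuousMultilinearCurryFin1_symm, ne_eq, FunLike.coe_zero_iff]

lemma StronglyAttains.tendsto_of_tendsto_re {Y : Type*} [NormedAddCommGroup Y] {f : X → Y}
    (h : StronglyAttains 𝕂 f x) {x' : X →L[𝕂] 𝕂} (hx' : x' x = 1) {xs : ℕ → X}
    (hxs : ∀ n, xs n ∈ closedBall (0 : X) 1)
    (hmax : Tendsto (fun n => ‖f (xs n)‖) atTop (𝓝 (supNorm f)))
    (hre : Tendsto (fun n => RCLike.re (x' (xs n))) atTop (𝓝 1)) :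
    Tendsto xs atTop (𝓝 x) := by
  refine tendsto_of_subseq_tendsto fun ns hns => ?_
  obtain ⟨α, φ, hφ, hα, hlim⟩ := h (xs ∘ ns) (fun n => hxs _) (hmax.comp hns)
  have hreα : RCLike.re α = 1 := by
    have hlim' := ((RCLike.continuous_re.comp x'.continuous).tendsto _).comp hlim
    rw [Function.comp_apply, map_smul, hx', smul_eq_mul, mul_one] at hlim'
    exact tendsto_nhds_unique hlim' (hre.comp (hns.comp hφ.tendsto_atTop))
  have hα1 : α = 1 := by
    simpa [hα] using RCLike.norm_le_re_iff_eq_norm.1 (hα.trans hreα.symm).le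
  exact ⟨φ, by simpa [hα1] using hlim⟩

lemma StronglyExposedPt.exists_stronglyAttains (h : StronglyExposedPt 𝕂 x) :
    ∃ g : X →L[𝕂] 𝕂, g ≠ 0 ∧ StronglyAttains 𝕂 g x := by
  obtain ⟨hx, x', hne, -, hsupp, hexp⟩ := h
  refine ⟨x', hne, fun xs hxs hlim => ?_⟩
  have hball : ∀ θ : 𝕂, ‖θ‖ = 1 → ∀ y ∈ closedBall (0 : X) 1, θ • y ∈ closedBall (0 : X) 1 :=
    fun θ hθ y hy => by simpa [norm_smul, hθ] using hy
  have hrot : ∀ y, ∃ θ : 𝕂, ‖θ‖ = 1 ∧ RCLike.re (x' (θ • y)) = ‖x' y‖ := fun y => by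
    obtain ⟨θ, hθ, hθy⟩ := RCLike.exists_norm_eq_mul_self (x' y)
    exact ⟨θ, hθ, by rw [map_smul, smul_eq_mul, ← hθy, RCLike.ofReal_re]⟩
  have hnorm : ‖x'‖ = RCLike.re (x' x) := by
    refine le_antisymm ((supNorm_continuousLinearMap x').symm.trans_le
      (supNorm_le fun y hy => ?_)) ((RCLike.re_le_norm _).trans
        (x'.unit_le_opNorm x (mem_closedBall_zero_iff.1 hx)))
    obtain ⟨θ, hθ, hθy⟩ := hrot y
    exact hθy ▸ hsupp _ (hball θ hθ y hy)
  choose θ hθ hθre using fun n => hrot (xs n)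
  have hθxs : Tendsto (fun n => θ n • xs n) atTop (𝓝 x) := by
    refine hexp _ (fun n => hball _ (hθ n) _ (hxs n)) ?_
    simpa only [hθre, ← hnorm, supNorm_continuousLinearMap] using hlim
  obtain ⟨θ₀, hθ₀, φ, hφ, hθφ⟩ :=
    (isCompact_sphere (0 : 𝕂) 1).tendsto_subseq (x := θ) (fun n => by simpa using hθ n)
  rw [mem_sphere_zero_iff_norm] at hθ₀
  refine ⟨θ₀⁻¹, φ, hφ, by rw [norm_inv, hθ₀, inv_one], ?_⟩
  refine ((hθφ.inv₀ (norm_ne_zero_iff.1 (by simp [hθ₀]))).smul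
    (hθxs.comp hφ.tendsto_atTop)).congr fun n => ?_
  have : θ (φ n) ≠ 0 := norm_ne_zero_iff.1 (by simp [hθ])
  simp [inv_smul_smul₀ this]

lemma StronglyAttains.stronglyExposedPt (hx : x ∈ closedBall (0 : X) 1) {g : X →L[𝕂] 𝕂}
    (hg : g ≠ 0) (h : StronglyAttains 𝕂 g x) : StronglyExposedPt 𝕂 x := by
  have hgx : ‖g x‖ = ‖g‖ := by
    rw [← supNorm_continuousLinearMap]
    refine h.norm_apply_eq_supNorm g.continuous ⟨‖g‖, forall_mem_image.2 fun y hy =>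
      g.unit_le_opNorm y (mem_closedBall_zero_iff.1 hy)⟩ fun α hα y => ?_
    rw [map_smul, norm_smul, hα, one_mul]
  have hgx0 : g x ≠ 0 := norm_ne_zero_iff.1 (hgx ▸ norm_ne_zero_iff.2 hg)
  set x' := (g x)⁻¹ • g
  have hx'x : x' x = 1 := inv_mul_cancel₀ hgx0
  have hx'norm : ‖x'‖ = 1 := by
    rw [norm_smul, norm_inv, hgx, inv_mul_cancel₀ (norm_ne_zero_iff.2 hg)]
  have hx'le : ∀ y ∈ closedBall (0 : X) 1, ‖x' y‖ ≤ 1 := fun y hy =>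
    hx'norm ▸ x'.unit_le_opNorm y (mem_closedBall_zero_iff.1 hy)
  refine ⟨hx, x', fun h0 => by simp [h0] at hx'x, hx'norm.le, fun y hy => ?_,
    fun xs hxs hre => ?_⟩
  · rw [hx'x, RCLike.one_re]
    exact (RCLike.re_le_norm _).trans (hx'le y hy)
  · rw [hx'x, RCLike.one_re] at hre
    have hx'xs : Tendsto (fun n => ‖x' (xs n)‖) atTop (𝓝 1) :=
      tendsto_of_tendsto_of_tendsto_of_le_of_le hre tendsto_const_nhds
        (fun n => RCLike.re_le_norm _) (fun n => hx'le _ (hxs n))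
    have hgxs : ∀ y, ‖g y‖ = ‖g‖ * ‖x' y‖ := fun y => by
      rw [← hgx, ← norm_mul, smul_apply, smul_eq_mul, mul_inv_cancel_left₀ hgx0]
    refine h.tendsto_of_tendsto_re hx'x hxs ?_ hre
    simpa [hgxs, supNorm_continuousLinearMap] using hx'xs.const_mul ‖g‖

end Functional

section Succ

variable {𝕂 X : Type*} [RCLike 𝕂] [NormedAddCommGroup X] [NormedSpace 𝕂 X] {k : ℕ}

lemma exists_polyEval_eq_mul (L : ContinuousMultilinearMap 𝕂 (fun _ : Fin k => X) 𝕂)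
    (x' : X →L[𝕂] 𝕂) :
    ∃ L' : ContinuousMultilinearMap 𝕂 (fun _ : Fin (k + 1) => X) 𝕂,
      ∀ y, polyEval L' y = polyEval L y * x' y :=
  ⟨(((ContinuousLinearMap.id 𝕂 𝕂).smulRight x').compContinuousMultilinearMap L).uncurryRight,
    fun _ => rfl⟩

theorem polyAttainPts_subset_succ (hk : k ≠ 0) :
    polyAttainPts 𝕂 X k ⊆ polyAttainPts 𝕂 X (k + 1) := by
  rintro x₀ ⟨hx₀, L, hL, hSA⟩
  have hnorm : ‖x₀‖ = 1 := hSA.norm_eq_one_of_polyEval hk hL hx₀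
  obtain ⟨x', hx'1, hx'x₀⟩ := exists_dual_vector 𝕂 x₀ (by simp [hnorm])
  obtain ⟨L', hL'⟩ := exists_polyEval_eq_mul L x'
  have hle : ∀ y ∈ closedBall (0 : X) 1, ‖polyEval L' y‖ ≤ ‖polyEval L y‖ := fun y hy => by
    rw [hL', norm_mul]
    exact mul_le_of_le_one_right (norm_nonneg _)
      (hx'1 ▸ x'.unit_le_opNorm y (mem_closedBall_zero_iff.1 hy))
  have hL'x₀ : polyEval L' x₀ = polyEval L x₀ := by simp [hL', hx'x₀, hnorm]
  have hsup : supNorm (polyEval L') = supNorm (polyEval L) :=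
    le_antisymm
      (supNorm_le fun y hy => (hle y hy).trans (norm_le_supNorm (bddAbove_norm_polyEval L) hy))
      (hSA.norm_polyEval_eq_supNorm ▸ hL'x₀ ▸ norm_le_supNorm (bddAbove_norm_polyEval L') hx₀)
  refine ⟨hx₀, L', fun h0 => ?_, hSA.mono (bddAbove_norm_polyEval L) hle hsup⟩
  have := hSA.norm_polyEval_eq_supNorm
  rw [← hL'x₀, h0, Pi.zero_apply, norm_zero] at this
  exact (supNorm_polyEval_pos L hL).ne this

end Succ

theorem statement1_general {𝕂 X : Type*} [RCLike 𝕂] [NormedAddCommGroup X] [NormedSpace 𝕂 X] :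
    (∀ x : X, StronglyExposedPt 𝕂 x ↔ x ∈ polyAttainPts 𝕂 X 1) ∧
      ∀ k : ℕ, 1 ≤ k → polyAttainPts 𝕂 X k ⊆ polyAttainPts 𝕂 X (k + 1) := by
  refine ⟨fun x => ?_, fun k hk => polyAttainPts_subset_succ (Nat.one_le_iff_ne_zero.1 hk)⟩
  rw [mem_polyAttainPts_one_iff]
  exact ⟨fun h => ⟨h.1, h.exists_stronglyAttains⟩,
    fun ⟨hx, g, hg, h⟩ => h.stronglyExposedPt hx hg⟩

/-- `sexp(B_X) = ρ̃𝒫(¹X)` and `ρ̃𝒫(ᵏX) ⊆ ρ̃𝒫(ᵏ⁺¹X)` for every `k ≥ 1`. -/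
theorem statement1 {𝕂 X : Type*} [RCLike 𝕂] [NormedAddCommGroup X] [NormedSpace 𝕂 X]
    [CompleteSpace X] :
    (∀ x : X, StronglyExposedPt 𝕂 x ↔ x ∈ polyAttainPts 𝕂 X 1) ∧
      ∀ k : ℕ, 1 ≤ k → polyAttainPts 𝕂 X k ⊆ polyAttainPts 𝕂 X (k + 1) :=
  statement1_general
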